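/- Two words u, v over {1,2} of the same length n have equal recording tableaux Q(u) = Q(v) under RSK if and only if the paired positions of u and v coincide and the letters at these paired positions agree; equivalently, u and v agree at every position that is paired (in the bracketing procedure) in either word, and the set of paired positions is the same for both. -/

import Mathlib

open MeasureTheory ProbabilityTheory

namespace RSKpaper

/-- Insert a letter into a row (Schensted row insertion); returns the new row
and the bumped letter, if any. -/
def rowInsert (r : List ℕ) (a : ℕ) : List ℕ × Option ℕ :=
  match r.findIdx? (fun b => decide (a < b)) with
  | none => (r ++ [a], none)
  | some i => (r.set i a, r[i]?)

/-- Insert a letter into a tableau (list of rows). -/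
def tabInsert : List (List ℕ) → ℕ → List (List ℕ)
  | [], a => [[a]]
  | r :: rs, a =>
    match rowInsert r a with
    | (r', none) => r' :: rs
    | (r', some b) => r' :: tabInsert rs b

/-- The RSK insertion tableau `P(w)` of a word. -/
def Ptab (w : List ℕ) : List (List ℕ) := w.foldl tabInsert ([] : List (List ℕ))

/-- The shape of the RSK tableaux of a word, as the list of row lengths. -/
def shape (w : List ℕ) : List ℕ := (Ptab w).map List.length

/-- The RSK recording tableau `Q(w)`: the entry `i+1` is placed in the row in
which the shape grows when the `(i+1)`-st letter is inserted. -/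
def Qtab (w : List ℕ) : List (List ℕ) :=
  (List.range w.length).foldl (fun q i =>
    let s1 := shape (w.take i)
    let s2 := shape (w.take (i + 1))
    let j := (List.range s2.length).findIdx
      (fun r => decide (s2.getD r 0 ≠ s1.getD r 0))
    if j < q.length then q.set j (q.getD j ([] : List ℕ) ++ [i + 1]) else q ++ [[i + 1]]) ([] : List (List ℕ))

/-- Iterated bracketing of factors `21` in a two–letter word, 1-based positions:
returns the stack of positions of currently unmatched `2`'s together with the
list of bracketed pairs `(position of 2, position of 1)`. -/
def bracketFold (w : List ℕ) : List ℕ × List (ℕ × ℕ) :=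
  (w.zipIdx.map Prod.swap).foldl (fun st p =>
    if p.2 = 2 then ((p.1 + 1) :: st.1, st.2)
    else
      match st.1 with
      | [] => st
      | j :: rest => (rest, (j, p.1 + 1) :: st.2)) ([], [])

/-- The rank `r(w)`: the number of bracketed `21`-pairs. -/
def rank (w : List ℕ) : ℕ := (bracketFold w).2.length

/-- The set of paired (bracketed) 1-based positions of a two-letter word. -/
def pairedPositions (w : List ℕ) : Finset ℕ :=
  ((bracketFold w).2.map (fun p => p.1)).toFinset ∪
    ((bracketFold w).2.map (fun p => p.2)).toFinset

/-- The set of free (unbracketed) 1-based positions of a two-letter word. -/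
def freePositions (w : List ℕ) : Finset ℕ :=
  (Finset.Icc 1 w.length) \ pairedPositions w

/-- The 1-based positions of the free `1`'s of a two-letter word. -/
def freeOnePositions (w : List ℕ) : Finset ℕ :=
  (freePositions w).filter (fun i => w.getD (i - 1) 0 = 1)

/-- The initial segment `[x]_n` of an infinite sequence, as a word. -/
def pre (n : ℕ) (x : ℕ → ℕ) : List ℕ := (List.range n).map x

/-- A two–letter Bernoulli ensemble: coordinates are i.i.d. with
`P(1) = p₁`, `P(2) = p₂`. -/
def IsBernoulli2 (μ : Measure (ℕ → ℕ)) (p₁ p₂ : ℝ) : Prop :=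
  IsProbabilityMeasure μ ∧
    iIndepFun (fun n (x : ℕ → ℕ) => x n) μ ∧
    (∀ n : ℕ, μ {x | x n = 1} = ENNReal.ofReal p₁) ∧
    (∀ n : ℕ, μ {x | x n = 2} = ENNReal.ofReal p₂) ∧
    p₁ + p₂ = 1

/-- A `k`-letter Bernoulli ensemble with letter probabilities `p 1 ≥ … ≥ p k`. -/
def IsBernoulliK (μ : Measure (ℕ → ℕ)) (k : ℕ) (p : ℕ → ℝ) : Prop :=
  IsProbabilityMeasure μ ∧
    iIndepFun (fun n (x : ℕ → ℕ) => x n) μ ∧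
    (∀ n i : ℕ, μ {x | x n = i} = ENNReal.ofReal (p i)) ∧
    (∀ i : ℕ, i < 1 ∨ k < i → p i = 0) ∧
    (∀ i : ℕ, 1 ≤ i → i < k → p (i + 1) ≤ p i) ∧
    0 < p k ∧ (∑ i ∈ Finset.Icc 1 k, p i) = 1

/-!
On a word over `{1, 2}`, row insertion keeps `P(w)` of the form `1^a 2^b / 2^r`, where `b` is
the number of unmatched `2`s and `r` the number of bracketed pairs. So the shape grows in the
second row exactly when the new letter is a `1` that closes a bracket, and `Q(w)` records
precisely the positions of the bracketed `1`s. These positions determine the whole bracketing: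
replaying it with exactly these positions popping the stack and all others pushed gives the same
pairs, because the extra entries of the replayed stack (the unbracketed `1`s) all lie below the
real stack. Conversely, the bracketed `1`s are the paired positions that carry a `1`.
-/

theorem getD_mem_of_lt {w : List ℕ} {t : ℕ} (ht : t < w.length) : w.getD t 0 ∈ w :=
  List.getD_eq_getElem w 0 ht ▸ List.getElem_mem ht

theorem take_add_one_eq_append_getD {w : List ℕ} {t : ℕ} (ht : t < w.length) :
    w.take (t + 1) = w.take t ++ [w.getD t 0] := by
  rw [List.getD_eq_getElem _ _ ht, List.take_append_getElem]

theorem bracketFold_append_singleton (w : List ℕ) (x : ℕ) :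
    bracketFold (w ++ [x]) =
      if x = 2 then ((w.length + 1) :: (bracketFold w).1, (bracketFold w).2)
      else match (bracketFold w).1 with
        | [] => bracketFold w
        | j :: rest => (rest, (j, w.length + 1) :: (bracketFold w).2) := by
  simp [bracketFold, List.zipIdx_append]

def ClosesBracket (w : List ℕ) (x : ℕ) : Prop := x = 1 ∧ (bracketFold w).1 ≠ []

instance (w : List ℕ) (x : ℕ) : Decidable (ClosesBracket w x) :=
  inferInstanceAs (Decidable (_ ∧ _))

theorem bracketFold_append_two (w : List ℕ) :
    bracketFold (w ++ [2]) = ((w.length + 1) :: (bracketFold w).1, (bracketFold w).2) := by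
  rw [bracketFold_append_singleton, if_pos rfl]

theorem bracketFold_append_one_of_stack_eq_nil {w : List ℕ} (h : (bracketFold w).1 = []) :
    bracketFold (w ++ [1]) = bracketFold w := by
  rw [bracketFold_append_singleton, if_neg (by decide), h]

theorem bracketFold_append_of_closesBracket {w : List ℕ} {x : ℕ} (h : ClosesBracket w x) :
    bracketFold (w ++ [x]) =
      ((bracketFold w).1.tail, ((bracketFold w).1.headD 0, w.length + 1) :: (bracketFold w).2) := by
  obtain ⟨rfl, hS⟩ := h
  obtain ⟨j, S, hjS⟩ := List.exists_cons_of_ne_nil hS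
  rw [bracketFold_append_singleton, if_neg (by decide), hjS]
  rfl

/-- `t` is a 0-based index, whereas `pairedPositions` are 1-based. -/
def closesAt (w : List ℕ) (t : ℕ) : Bool := decide (ClosesBracket (w.take t) (w.getD t 0))

theorem closesAt_zero (w : List ℕ) : closesAt w 0 = false := by
  simp [closesAt, ClosesBracket, bracketFold]

theorem closesAt_of_length_le {w : List ℕ} {t : ℕ} (ht : w.length ≤ t) :
    closesAt w t = false := by
  rw [closesAt, List.getD_eq_default _ _ ht]
  simp [ClosesBracket]

def replayBrackets (c : ℕ → Bool) : ℕ → List ℕ × List (ℕ × ℕ)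
  | 0 => ([], [])
  | t + 1 =>
    if c t then
      ((replayBrackets c t).1.tail,
        ((replayBrackets c t).1.headD 0, t + 1) :: (replayBrackets c t).2)
    else ((t + 1) :: (replayBrackets c t).1, (replayBrackets c t).2)

theorem mem_map_snd_replayBrackets (c : ℕ → Bool) (t b : ℕ) :
    b ∈ (replayBrackets c t).2.map Prod.snd ↔ ∃ s < t, c s ∧ s + 1 = b := by
  induction t with
  | zero => simp [replayBrackets]
  | succ t ih =>
    by_cases hc : c t
    · simp only [replayBrackets, hc, if_true, List.map_cons, List.mem_cons, ih]
      constructor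
      · rintro (rfl | ⟨s, hs, hcs, rfl⟩)
        exacts [⟨t, by omega, hc, rfl⟩, ⟨s, by omega, hcs, rfl⟩]
      · rintro ⟨s, hs, hcs, rfl⟩
        rcases Nat.lt_succ_iff_lt_or_eq.1 hs with hs | rfl
        exacts [Or.inr ⟨s, hs, hcs, rfl⟩, Or.inl rfl]
    · simp only [replayBrackets, hc, Bool.false_eq_true, if_false, ih]
      constructor
      · rintro ⟨s, hs, hcs, rfl⟩
        exact ⟨s, by omega, hcs, rfl⟩
      · rintro ⟨s, hs, hcs, rfl⟩
        rcases Nat.lt_succ_iff_lt_or_eq.1 hs with hs | rfl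
        exacts [⟨s, hs, hcs, rfl⟩, absurd hcs hc]

/-- The real stack sits on top of the replayed one, which also holds the unbracketed `1`s. -/
theorem replayBrackets_closesAt {w : List ℕ} (hw : ∀ a ∈ w, a = 1 ∨ a = 2) :
    ∀ t ≤ w.length, ∃ rest, replayBrackets (closesAt w) t =
      ((bracketFold (w.take t)).1 ++ rest, (bracketFold (w.take t)).2) := by
  intro t ht
  induction t with
  | zero => exact ⟨[], rfl⟩
  | succ t ih =>
    obtain ⟨rest, hrest⟩ := ih (by omega)
    have hx := hw _ (getD_mem_of_lt (by omega : t < w.length))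
    have hlen : (w.take t).length = t := List.length_take_of_le (by omega)
    rw [take_add_one_eq_append_getD (by omega)]
    by_cases hc : ClosesBracket (w.take t) (w.getD t 0)
    · obtain ⟨j, S, hjS⟩ := List.exists_cons_of_ne_nil hc.2
      refine ⟨rest, ?_⟩
      rw [bracketFold_append_of_closesBracket hc]
      simp [replayBrackets, show closesAt w t = true from decide_eq_true hc, hrest, hlen, hjS]
    · have hnc : closesAt w t = false := decide_eq_false hc
      rcases hx with hx | hx
      · have hS : (bracketFold (w.take t)).1 = [] := by
          by_contra hS
          exact hc ⟨hx, hS⟩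
        refine ⟨(t + 1) :: rest, ?_⟩
        rw [hx, bracketFold_append_one_of_stack_eq_nil hS]
        simp [replayBrackets, hnc, hrest, hS]
      · refine ⟨rest, ?_⟩
        rw [hx, bracketFold_append_two]
        simp [replayBrackets, hnc, hrest, hlen]

theorem pairs_eq_replayBrackets {w : List ℕ} (hw : ∀ a ∈ w, a = 1 ∨ a = 2) :
    (bracketFold w).2 = (replayBrackets (closesAt w) w.length).2 := by
  obtain ⟨rest, h⟩ := replayBrackets_closesAt hw w.length le_rfl
  rw [h, List.take_length]

theorem mem_map_snd_pairs_iff {w : List ℕ} (hw : ∀ a ∈ w, a = 1 ∨ a = 2) (b : ℕ) :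
    b ∈ (bracketFold w).2.map Prod.snd ↔ ∃ s, closesAt w s ∧ s + 1 = b := by
  rw [pairs_eq_replayBrackets hw, mem_map_snd_replayBrackets]
  refine ⟨fun ⟨s, _, hs⟩ => ⟨s, hs⟩, fun ⟨s, hs⟩ => ⟨s, ?_, hs⟩⟩
  by_contra hlt
  simp [closesAt_of_length_le (not_lt.1 hlt)] at hs

theorem getD_fst_of_mem_pairs {w : List ℕ} (hw : ∀ a ∈ w, a = 1 ∨ a = 2) {p : ℕ × ℕ}
    (hp : p ∈ (bracketFold w).2) : w.getD (p.1 - 1) 0 = 2 := by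
  suffices h : ∀ t ≤ w.length, (∀ j ∈ (bracketFold (w.take t)).1, w.getD (j - 1) 0 = 2) ∧
      ∀ p ∈ (bracketFold (w.take t)).2, w.getD (p.1 - 1) 0 = 2 by
    exact (h w.length le_rfl).2 p (by rwa [List.take_length])
  intro t ht
  induction t with
  | zero => simp [bracketFold]
  | succ t ih =>
    obtain ⟨hS, hP⟩ := ih (by omega)
    have hlen : (w.take t).length = t := List.length_take_of_le (by omega)
    rw [take_add_one_eq_append_getD (by omega)]
    rcases hw _ (getD_mem_of_lt (by omega : t < w.length)) with hx | hx
    · by_cases hc : ClosesBracket (w.take t) (w.getD t 0)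
      · obtain ⟨j, S, hjS⟩ := List.exists_cons_of_ne_nil hc.2
        rw [bracketFold_append_of_closesBracket hc, hjS]
        rw [hjS] at hS
        exact ⟨fun k hk => hS k (List.mem_cons_of_mem _ hk),
          fun q hq => (List.mem_cons.1 hq).elim (fun h => h ▸ hS j List.mem_cons_self) (hP q)⟩
      · rw [hx, bracketFold_append_one_of_stack_eq_nil (by by_contra h; exact hc ⟨hx, h⟩)]
        exact ⟨hS, hP⟩
    · rw [hx, bracketFold_append_two, hlen]
      exact ⟨fun j hj => (List.mem_cons.1 hj).elim (fun h => by simpa [h] using hx) (hS j), hP⟩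

theorem closesAt_iff {w : List ℕ} (hw : ∀ a ∈ w, a = 1 ∨ a = 2) (t : ℕ) :
    closesAt w t ↔ t + 1 ∈ pairedPositions w ∧ w.getD t 0 = 1 := by
  simp only [pairedPositions, Finset.mem_union, List.mem_toFinset]
  constructor
  · intro h
    exact ⟨Or.inr ((mem_map_snd_pairs_iff hw _).2 ⟨t, h, rfl⟩), (of_decide_eq_true h).1⟩
  · rintro ⟨hfst | hsnd, h1⟩
    · obtain ⟨p, hp, hpt⟩ := List.mem_map.1 hfst
      have := getD_fst_of_mem_pairs hw hp
      rw [hpt, Nat.add_sub_cancel] at this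
      omega
    · obtain ⟨s, hs, hst⟩ := (mem_map_snd_pairs_iff hw _).1 hsnd
      rwa [← Nat.succ_injective hst]

theorem getD_of_mem_pairedPositions {w : List ℕ} (hw : ∀ a ∈ w, a = 1 ∨ a = 2) {i : ℕ}
    (hi : i ∈ pairedPositions w) :
    w.getD (i - 1) 0 = if i ∈ (bracketFold w).2.map Prod.snd then 1 else 2 := by
  split_ifs with hsnd
  · obtain ⟨s, hs, rfl⟩ := (mem_map_snd_pairs_iff hw _).1 hsnd
    exact ((closesAt_iff hw s).1 hs).2
  · simp only [pairedPositions, Finset.mem_union, List.mem_toFinset, hsnd, or_false] at hi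
    obtain ⟨p, hp, rfl⟩ := List.mem_map.1 hi
    exact getD_fst_of_mem_pairs hw hp

theorem closesAt_eq_iff {u v : List ℕ} (hu : ∀ a ∈ u, a = 1 ∨ a = 2)
    (hv : ∀ a ∈ v, a = 1 ∨ a = 2) (hlen : u.length = v.length) :
    closesAt u = closesAt v ↔ pairedPositions u = pairedPositions v ∧
      ∀ i ∈ pairedPositions u, u.getD (i - 1) 0 = v.getD (i - 1) 0 := by
  constructor
  · intro h
    have hpairs : (bracketFold u).2 = (bracketFold v).2 := by
      rw [pairs_eq_replayBrackets hu, pairs_eq_replayBrackets hv, h, hlen]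
    have hpp : pairedPositions u = pairedPositions v := by simp only [pairedPositions, hpairs]
    refine ⟨hpp, fun i hi => ?_⟩
    rw [getD_of_mem_pairedPositions hu hi, getD_of_mem_pairedPositions hv (hpp ▸ hi), hpairs]
  · rintro ⟨hpp, hletters⟩
    funext t
    apply Bool.eq_iff_iff.2
    rw [closesAt_iff hu, closesAt_iff hv, ← hpp]
    exact and_congr_right fun ht => by simpa using congrArg (· = 1) (hletters _ ht)

/-- Rows `1^a 2^b` and `2^r`. An empty first row is kept when `r ≠ 0`: this never happens for
an insertion tableau, but makes inserting a `2` uniform. -/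
def twoRowTableau (a b r : ℕ) : List (List ℕ) :=
  if r = 0 then (if a + b = 0 then [] else [List.replicate a 1 ++ List.replicate b 2])
  else [List.replicate a 1 ++ List.replicate b 2, List.replicate r 2]

def twoRowShape (m r : ℕ) : List ℕ := if r = 0 then (if m = 0 then [] else [m]) else [m, r]

theorem map_length_twoRowTableau (a b r : ℕ) :
    (twoRowTableau a b r).map List.length = twoRowShape (a + b) r := by
  unfold twoRowTableau twoRowShape
  split_ifs <;> simp

theorem rowInsert_of_forall_le {l : List ℕ} {x : ℕ} (h : ∀ c ∈ l, c ≤ x) :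
    rowInsert l x = (l ++ [x], none) := by
  have : l.findIdx? (fun c => decide (x < c)) = none :=
    List.findIdx?_eq_none_iff.2 fun c hc => by simpa using h c hc
  simp [rowInsert, this]

theorem rowInsert_two (a b : ℕ) :
    rowInsert (List.replicate a 1 ++ List.replicate b 2) 2 =
      (List.replicate a 1 ++ List.replicate (b + 1) 2, none) := by
  rw [rowInsert_of_forall_le fun c hc => by
    rcases List.mem_append.1 hc with h | h <;> simp [List.eq_of_mem_replicate h]]
  simp [List.replicate_succ']

theorem rowInsert_one_of_replicate_one (a : ℕ) :
    rowInsert (List.replicate a 1) 1 = (List.replicate (a + 1) 1, none) := by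
  rw [rowInsert_of_forall_le fun c hc => by simp [List.eq_of_mem_replicate hc]]
  simp [List.replicate_succ']

theorem rowInsert_one_of_two (a b : ℕ) :
    rowInsert (List.replicate a 1 ++ List.replicate (b + 1) 2) 1 =
      (List.replicate (a + 1) 1 ++ List.replicate b 2, some 2) := by
  have hfind : (List.replicate a 1 ++ List.replicate (b + 1) 2).findIdx?
      (fun c => decide (1 < c)) = some a := by
    rw [List.findIdx?_append, List.findIdx?_eq_none_iff.2 (by simp)]
    simp [List.replicate_succ, List.findIdx?_cons]
  simp only [rowInsert, hfind]
  rw [List.set_append_right _ _ (by simp), List.getElem?_append_right (by simp),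
    List.replicate_succ' (n := a)]
  simp [List.replicate_succ (n := b)]

theorem tabInsert_twoRowTableau_two (a b r : ℕ) :
    tabInsert (twoRowTableau a b r) 2 = twoRowTableau a (b + 1) r := by
  by_cases hr : r = 0
  · by_cases hab : a + b = 0
    · obtain ⟨rfl, rfl⟩ : a = 0 ∧ b = 0 := by omega
      simp [twoRowTableau, tabInsert, hr]
    · rw [twoRowTableau, twoRowTableau, if_pos hr, if_neg hab, if_pos hr, if_neg (by omega)]
      simp [tabInsert, rowInsert_two]
  · simp [twoRowTableau, hr, tabInsert, rowInsert_two]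

theorem tabInsert_twoRowTableau_one_zero (a r : ℕ) :
    tabInsert (twoRowTableau a 0 r) 1 = twoRowTableau (a + 1) 0 r := by
  have h1 := rowInsert_one_of_replicate_one a
  by_cases hr : r = 0
  · by_cases ha : a = 0
    · simp [twoRowTableau, tabInsert, hr, ha]
    · simp [twoRowTableau, hr, ha, tabInsert, h1]
  · simp [twoRowTableau, hr, tabInsert, h1]

theorem tabInsert_twoRowTableau_one_succ (a b r : ℕ) :
    tabInsert (twoRowTableau a (b + 1) r) 1 = twoRowTableau (a + 1) b (r + 1) := by
  have hr2 := rowInsert_two 0 r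
  simp only [List.replicate_zero, List.nil_append] at hr2
  by_cases hr : r = 0
  · simp [twoRowTableau, hr, tabInsert, rowInsert_one_of_two]
  · simp [twoRowTableau, hr, tabInsert, rowInsert_one_of_two, hr2]

theorem Ptab_append_singleton (w : List ℕ) (x : ℕ) :
    Ptab (w ++ [x]) = tabInsert (Ptab w) x := by
  simp [Ptab]

theorem Ptab_eq_twoRowTableau {w : List ℕ} (hw : ∀ a ∈ w, a = 1 ∨ a = 2) :
    Ptab w = twoRowTableau (w.count 1) (bracketFold w).1.length (rank w) := by
  induction w using List.reverseRecOn with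
  | nil => rfl
  | append_singleton w x ih =>
    rw [Ptab_append_singleton, ih fun a ha => hw a (by simp [ha])]
    simp only [rank]
    rcases hw x (by simp) with rfl | rfl
    · by_cases hc : ClosesBracket w 1
      · obtain ⟨j, S, hjS⟩ := List.exists_cons_of_ne_nil hc.2
        rw [bracketFold_append_of_closesBracket hc, hjS]
        simpa using tabInsert_twoRowTableau_one_succ (w.count 1) S.length (bracketFold w).2.length
      · have hS : (bracketFold w).1 = [] := by
          by_contra h
          exact hc ⟨rfl, h⟩
        rw [bracketFold_append_one_of_stack_eq_nil hS, hS]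
        simpa using tabInsert_twoRowTableau_one_zero (w.count 1) (bracketFold w).2.length
    · rw [bracketFold_append_two]
      simpa using tabInsert_twoRowTableau_two (w.count 1) _ (bracketFold w).2.length

theorem shape_append_singleton {w : List ℕ} {x : ℕ} (hw : ∀ a ∈ w, a = 1 ∨ a = 2)
    (hx : x = 1 ∨ x = 2) : ∃ m r, shape w = twoRowShape m r ∧
      shape (w ++ [x]) =
        if ClosesBracket w x then twoRowShape m (r + 1) else twoRowShape (m + 1) r := by
  have hwx : ∀ a ∈ w ++ [x], a = 1 ∨ a = 2 := by
    simpa [or_imp, forall_and] using ⟨hw, hx⟩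
  refine ⟨w.count 1 + (bracketFold w).1.length, rank w, ?_, ?_⟩
  · rw [shape, Ptab_eq_twoRowTableau hw, map_length_twoRowTableau]
  rw [shape, Ptab_eq_twoRowTableau hwx, map_length_twoRowTableau]
  simp only [rank]
  rcases hx with rfl | rfl
  · by_cases hc : ClosesBracket w 1
    · obtain ⟨j, S, hjS⟩ := List.exists_cons_of_ne_nil hc.2
      rw [if_pos hc, bracketFold_append_of_closesBracket hc, hjS]
      simp only [List.count_append, List.count_singleton_self, List.tail_cons, List.length_cons,
        List.headD_cons]
      congr 1
      omega
    · have hS : (bracketFold w).1 = [] := by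
        by_contra h
        exact hc ⟨rfl, h⟩
      rw [if_neg hc, bracketFold_append_one_of_stack_eq_nil hS, hS]
      simp
  · rw [if_neg (fun h => absurd h.1 (by decide)), bracketFold_append_two]
    simp [Nat.add_assoc]

/-- The row in which a shape `s₁` grows to `s₂`, as computed in `Qtab`. -/
def growthRow (s₁ s₂ : List ℕ) : ℕ :=
  (List.range s₂.length).findIdx (fun r => decide (s₂.getD r 0 ≠ s₁.getD r 0))

theorem growthRow_twoRowShape_succ_left (m r : ℕ) :
    growthRow (twoRowShape m r) (twoRowShape (m + 1) r) = 0 := by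
  unfold growthRow twoRowShape
  split_ifs <;> simp [List.range_succ, List.findIdx_cons]

theorem growthRow_twoRowShape_succ_right (m r : ℕ) :
    growthRow (twoRowShape m r) (twoRowShape m (r + 1)) = 1 := by
  unfold growthRow twoRowShape
  split_ifs <;> simp_all [List.range_succ, List.findIdx_cons]

def placeEntry (q : List (List ℕ)) (j e : ℕ) : List (List ℕ) :=
  if j < q.length then q.set j (q.getD j [] ++ [e]) else q ++ [[e]]

/-- The recording tableau of a growth of two-row shapes in which step `i` adds a box to the
second row iff `c i`. -/
def recordRows (c : ℕ → Bool) (n : ℕ) : List (List ℕ) :=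
  (List.range n).foldl (fun q i => placeEntry q (if c i then 1 else 0) (i + 1)) []

theorem Qtab_eq_recordRows {w : List ℕ} (hw : ∀ a ∈ w, a = 1 ∨ a = 2) :
    Qtab w = recordRows (closesAt w) w.length := by
  refine List.foldl_ext _ _ _ fun q i hi => ?_
  have hi : i < w.length := List.mem_range.1 hi
  obtain ⟨m, r, h₁, h₂⟩ := shape_append_singleton (w := w.take i)
    (fun a ha => hw a (List.mem_of_mem_take ha)) (hw _ (getD_mem_of_lt hi))
  rw [← take_add_one_eq_append_getD hi] at h₂
  show placeEntry q (growthRow (shape (w.take i)) (shape (w.take (i + 1)))) (i + 1) =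
    placeEntry q (if closesAt w i then 1 else 0) (i + 1)
  rw [h₁, h₂]
  by_cases hc : ClosesBracket (w.take i) (w.getD i 0)
  · rw [if_pos hc, show closesAt w i = true from decide_eq_true hc, if_pos rfl,
      growthRow_twoRowShape_succ_right]
  · rw [if_neg hc, show closesAt w i = false from decide_eq_false hc,
      growthRow_twoRowShape_succ_left]
    rfl

def entriesWhere (c : ℕ → Bool) (n : ℕ) : List ℕ := ((List.range n).filter c).map (· + 1)

theorem entriesWhere_succ (c : ℕ → Bool) (n : ℕ) :
    entriesWhere c (n + 1) = entriesWhere c n ++ if c n then [n + 1] else [] := by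
  cases h : c n <;> simp [entriesWhere, List.range_succ, h]

theorem recordRows_eq {c : ℕ → Bool} (h0 : c 0 = false) (n : ℕ) :
    recordRows c n =
      if n = 0 then []
      else if entriesWhere c n = [] then [entriesWhere (fun t => !c t) n]
      else [entriesWhere (fun t => !c t) n, entriesWhere c n] := by
  induction n with
  | zero => rfl
  | succ n ih =>
    have hrec : recordRows c (n + 1) =
        placeEntry (recordRows c n) (if c n then 1 else 0) (n + 1) := by
      simp [recordRows, List.range_succ]
    rw [hrec, ih, entriesWhere_succ, entriesWhere_succ]
    rcases Nat.eq_zero_or_pos n with rfl | hn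
    · simp [placeEntry, h0, entriesWhere]
    · rw [if_neg hn.ne', if_neg (Nat.succ_ne_zero n)]
      generalize entriesWhere c n = R
      generalize entriesWhere (fun t => !c t) n = L
      cases hcn : c n <;> by_cases hR : R = [] <;> simp [placeEntry, hR]

theorem head?_recordRows {c : ℕ → Bool} (h0 : c 0 = false) {n : ℕ} (hn : n ≠ 0) :
    (recordRows c n).head? = some (entriesWhere (fun t => !c t) n) := by
  rw [recordRows_eq h0, if_neg hn]
  split_ifs <;> rfl

theorem succ_mem_entriesWhere_iff (c : ℕ → Bool) (n t : ℕ) :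
    t + 1 ∈ entriesWhere c n ↔ t < n ∧ c t := by
  simp [entriesWhere]

theorem eq_of_recordRows_eq {c c' : ℕ → Bool} (h0 : c 0 = false) (h0' : c' 0 = false) {n : ℕ}
    (h : recordRows c n = recordRows c' n) {t : ℕ} (ht : t < n) : c t = c' t := by
  have hL := congrArg List.head? h
  rw [head?_recordRows h0 (by omega), head?_recordRows h0' (by omega), Option.some_inj] at hL
  have := congrArg (t + 1 ∈ ·) hL
  simpa [succ_mem_entriesWhere_iff, ht] using this

theorem Qtab_eq_iff_closesAt {u v : List ℕ} (hu : ∀ a ∈ u, a = 1 ∨ a = 2)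
    (hv : ∀ a ∈ v, a = 1 ∨ a = 2) (hlen : u.length = v.length) :
    Qtab u = Qtab v ↔ closesAt u = closesAt v := by
  rw [Qtab_eq_recordRows hu, Qtab_eq_recordRows hv, ← hlen]
  refine ⟨fun h => funext fun t => ?_, fun h => by rw [h]⟩
  rcases lt_or_ge t u.length with ht | ht
  · exact eq_of_recordRows_eq (closesAt_zero u) (closesAt_zero v) h ht
  · rw [closesAt_of_length_le ht, closesAt_of_length_le (hlen ▸ ht)]

/-- for two-letter words of the same length, the recording tableaux
coincide iff the sets of paired positions coincide and the letters at the paired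
positions agree. -/
theorem Qtab_eq_iff_paired (u v : List ℕ)
    (hu : ∀ a ∈ u, a = 1 ∨ a = 2) (hv : ∀ a ∈ v, a = 1 ∨ a = 2)
    (hlen : u.length = v.length) :
    Qtab u = Qtab v ↔
      pairedPositions u = pairedPositions v ∧
        ∀ i ∈ pairedPositions u, u.getD (i - 1) 0 = v.getD (i - 1) 0 :=
  (Qtab_eq_iff_closesAt hu hv hlen).trans (closesAt_eq_iff hu hv hlen)

end RSKpaper
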